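/- Let V : ℝ^n → ℝ be C², strongly convex with parameter μ > 0 on a ball B(θ₀, r), with ∥∇V(θ₀)∥ ≤ g and μr² − gr > V(θ₀) ≥ 0 where V ≥ 0 everywhere. Then the solution of the negative gradient flow θ'(t) = −∇V(θ(t)) starting at θ(0) = θ₀ remains in B(θ₀, r) for all t ≥ 0. -/

import Mathlib

/-!
Strong convexity on the ball makes `∇V` strongly monotone there, so on the sphere
`‖θ - θ₀‖ = r` we get `⟪θ - θ₀, ∇V θ⟫ ≥ μ r² - ‖∇V θ₀‖ r ≥ μ r² - g r > V θ₀ ≥ 0`.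
Hence `‖θ(t) - θ₀‖²` has negative derivative whenever the flow touches the sphere, and a
barrier argument keeps it below `r²`.
-/

noncomputable section
open scoped RealInnerProductSpace

variable {E : Type*} [NormedAddCommGroup E] [InnerProductSpace ℝ E]

theorem ContDiff.contDiff_gradient [CompleteSpace E] {f : E → ℝ} {n : WithTop ℕ∞}
    (hf : ContDiff ℝ (n + 1) f) : ContDiff ℝ n (gradient f) :=
  (InnerProductSpace.toDual ℝ E).symm.contDiff.comp (hf.fderiv_right le_rfl)

theorem Convex.mul_norm_sub_sq_le_inner_sub {F : E → E} {s : Set E} {μ : ℝ} (hs : Convex ℝ s)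
    (hF : ∀ x ∈ s, DifferentiableAt ℝ F x)
    (hF' : ∀ x ∈ s, ∀ v, μ * ‖v‖ ^ 2 ≤ ⟪v, fderiv ℝ F x v⟫) {x y : E} (hx : x ∈ s)
    (hy : y ∈ s) : μ * ‖y - x‖ ^ 2 ≤ ⟪y - x, F y - F x⟫ := by
  set u := y - x
  have hseg : ∀ t ∈ Set.Icc (0 : ℝ) 1, x + t • u ∈ s := fun t ht => hs.add_smul_sub_mem hx hy ht
  have hderiv : ∀ t ∈ Set.Icc (0 : ℝ) 1,
      HasDerivAt (fun t : ℝ => ⟪u, F (x + t • u)⟫) ⟪u, fderiv ℝ F (x + t • u) u⟫ t := by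
    intro t ht
    have hline : HasDerivAt (fun t : ℝ => x + t • u) u t := by
      simpa using ((hasDerivAt_id t).smul_const u).const_add x
    simpa using (hasDerivAt_const t u).inner ℝ
      ((hF _ (hseg t ht)).hasFDerivAt.comp_hasDerivAt t hline)
  obtain ⟨c, hc, hslope⟩ := exists_hasDerivAt_eq_slope _ _ zero_lt_one
    (fun t ht => (hderiv t ht).continuousAt.continuousWithinAt)
    (fun t ht => hderiv t (Set.Ioo_subset_Icc_self ht))
  have := hF' _ (hseg c (Set.Ioo_subset_Icc_self hc)) u
  rw [hslope] at this
  simpa [u, inner_sub_right] using this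

theorem mem_closedBall_of_hasDerivAt_of_inner_neg {γ : ℝ → E} {F : E → E} {c : E} {r : ℝ}
    (hγ₀ : γ 0 ∈ Metric.closedBall c r) (hγ : ∀ t, 0 ≤ t → HasDerivAt γ (F (γ t)) t)
    (hF : ∀ x, ‖x - c‖ = r → ⟪x - c, F x⟫ < 0) : ∀ t, 0 ≤ t → γ t ∈ Metric.closedBall c r := by
  have hr : 0 ≤ r := Metric.nonempty_closedBall.mp ⟨_, hγ₀⟩
  have hdist : ∀ t, 0 ≤ t →
      HasDerivAt (‖γ · - c‖ ^ 2) (2 * ⟪γ t - c, F (γ t)⟫) t :=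
    fun t ht => ((hγ t ht).sub_const c).norm_sq
  intro t ht
  have hsq : ‖γ t - c‖ ^ 2 ≤ r ^ 2 := by
    refine image_le_of_deriv_right_lt_deriv_boundary (a := 0) (b := t) (B := fun _ => r ^ 2)
      (fun s hs => (hdist s hs.1).continuousAt.continuousWithinAt)
      (fun s hs => (hdist s hs.1).hasDerivWithinAt) ?_ (fun _ => hasDerivAt_const _ _) ?_
      ⟨ht, le_rfl⟩
    · simpa [← dist_eq_norm, pow_le_pow_iff_left₀ dist_nonneg hr] using hγ₀
    · intro s _ hs
      have := hF (γ s) ((pow_left_inj₀ (norm_nonneg _) hr two_ne_zero).mp hs)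
      linarith
  rw [Metric.mem_closedBall, dist_eq_norm]
  exact (pow_le_pow_iff_left₀ (norm_nonneg _) hr two_ne_zero).mp hsq

theorem stmt3_general {n : ℕ} (V : EuclideanSpace ℝ (Fin n) → ℝ)
    (θ₀ : EuclideanSpace ℝ (Fin n)) (r μ g : ℝ)
    (hr : 0 < r)
    (hV : ContDiff ℝ 2 V)
    (hVnonneg : ∀ x, 0 ≤ V x)
    (hHess : ∀ θ ∈ Metric.closedBall θ₀ r, ∀ v : EuclideanSpace ℝ (Fin n),
      μ * ‖v‖ ^ 2 ≤ ⟪v, fderiv ℝ (gradient V) θ v⟫)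
    (hgrad : ‖gradient V θ₀‖ ≤ g)
    (hcond : μ * r ^ 2 - g * r > V θ₀)
    (θtraj : ℝ → EuclideanSpace ℝ (Fin n))
    (hinit : θtraj 0 = θ₀)
    (hflow : ∀ t, 0 ≤ t → HasDerivAt θtraj (-(gradient V (θtraj t))) t) :
    ∀ t, 0 ≤ t → θtraj t ∈ Metric.closedBall θ₀ r := by
  have hdiff : Differentiable ℝ (gradient V) :=
    (ContDiff.contDiff_gradient (n := 1) hV).differentiable one_ne_zero
  refine mem_closedBall_of_hasDerivAt_of_inner_neg (F := fun x => -gradient V x)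
    (by simp [hinit, hr.le]) hflow ?_
  intro θ hθ
  have hmono : μ * r ^ 2 ≤ ⟪θ - θ₀, gradient V θ - gradient V θ₀⟫ := by
    have hθr : θ ∈ Metric.closedBall θ₀ r := by rw [Metric.mem_closedBall, dist_eq_norm, hθ]
    rw [← hθ]
    exact (convex_closedBall θ₀ r).mul_norm_sub_sq_le_inner_sub (fun x _ => hdiff x) hHess
      (Metric.mem_closedBall_self hr.le) hθr
  have hcs : -(r * g) ≤ ⟪θ - θ₀, gradient V θ₀⟫ :=
    calc -(r * g) ≤ -(‖θ - θ₀‖ * ‖gradient V θ₀‖) := by rw [hθ]; gcongr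
      _ ≤ ⟪θ - θ₀, gradient V θ₀⟫ := neg_le_of_abs_le (abs_real_inner_le_norm _ _)
  rw [inner_sub_right] at hmono
  rw [inner_neg_right]
  linarith [hVnonneg θ₀]

/-- If `V` is C², nonnegative, strongly convex with parameter `μ` on the closed
ball `B(θ₀, r)` (i.e. `∇²V ⪰ μI` there), `‖∇V(θ₀)‖ ≤ g` and
`μr² − gr > V(θ₀) ≥ 0`, then the negative gradient flow started at `θ₀` stays in
`B(θ₀, r)` for all `t ≥ 0`. -/
theorem stmt3 {n : ℕ} (V : EuclideanSpace ℝ (Fin n) → ℝ)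
    (θ₀ : EuclideanSpace ℝ (Fin n)) (r μ g : ℝ)
    (hr : 0 < r) (hμ : 0 < μ) (hg : 0 ≤ g)
    (hV : ContDiff ℝ 2 V)
    (hVnonneg : ∀ x, 0 ≤ V x)
    (hHess : ∀ θ ∈ Metric.closedBall θ₀ r, ∀ v : EuclideanSpace ℝ (Fin n),
      μ * ‖v‖ ^ 2 ≤ ⟪v, fderiv ℝ (gradient V) θ v⟫)
    (hgrad : ‖gradient V θ₀‖ ≤ g)
    (hcond : μ * r ^ 2 - g * r > V θ₀)
    (θtraj : ℝ → EuclideanSpace ℝ (Fin n))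
    (hinit : θtraj 0 = θ₀)
    (hflow : ∀ t, 0 ≤ t → HasDerivAt θtraj (-(gradient V (θtraj t))) t) :
    ∀ t, 0 ≤ t → θtraj t ∈ Metric.closedBall θ₀ r :=
  stmt3_general V θ₀ r μ g hr hV hVnonneg hHess hgrad hcond θtraj hinit hflow
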